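/- Let k ∈ ℝ, let c ∈ (0, π/√k) if k > 0 (c > 0 otherwise), and let θ, θ' ∈ [0,π]. For τ > 0 let m(τ) and m'(τ) denote the third side length of the S²_k-triangle with sides c, τ and included angle θ, θ' respectively. If m(τ) ≤ m'(τ) + o(τ) as τ → 0⁺, then θ ≤ θ'. -/

import Mathlib

open Filter Set

/-- Inverse hyperbolic cosine. -/
noncomputable def arcosh (x : ℝ) : ℝ := Real.log (x + Real.sqrt (x ^ 2 - 1))

/-- The third side of the triangle in `S²_k` with sides `c`, `τ` and included angle `θ`,
given by the law of cosines of the model space. -/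
noncomputable def sideLen (k c θ τ : ℝ) : ℝ :=
  if 0 < k then
    (1 / Real.sqrt k) * Real.arccos (Real.cos (Real.sqrt k * c) * Real.cos (Real.sqrt k * τ)
      + Real.sin (Real.sqrt k * c) * Real.sin (Real.sqrt k * τ) * Real.cos θ)
  else if k = 0 then Real.sqrt (c ^ 2 + τ ^ 2 - 2 * c * τ * Real.cos θ)
  else
    (1 / Real.sqrt (-k)) * arcosh (Real.cosh (Real.sqrt (-k) * c) * Real.cosh (Real.sqrt (-k) * τ)
      - Real.sinh (Real.sqrt (-k) * c) * Real.sinh (Real.sqrt (-k) * τ) * Real.cos θ)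

/-!
The triangle degenerates at `τ = 0`, so `m(0) = c`, and differentiating the law of cosines
gives the first variation formula `(dm/dτ)(0) = -cos θ` in every curvature. Hence
`(m(τ) - m'(τ)) / τ → cos θ' - cos θ`, the hypothesis says `cos θ' ≤ cos θ`, and `cos` is
strictly decreasing on `[0, π]`.
-/

open Topology
open Real hiding arcosh

theorem arcosh_eq_real_arcosh : arcosh = Real.arcosh := rfl

theorem Real.hasDerivAt_arccos_cos {x : ℝ} (h₀ : 0 < x) (hπ : x < π) :
    HasDerivAt arccos (-(sin x)⁻¹) (cos x) := by
  have hsin : 0 < sin x := sin_pos_of_pos_of_lt_pi h₀ hπ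
  have hcos : |cos x| < 1 := by
    rw [← sq_lt_one_iff_abs_lt_one]
    nlinarith [sin_sq_add_cos_sq x]
  have hsqrt : √(1 - cos x ^ 2) = sin x := by rw [← sin_sq, sqrt_sq hsin.le]
  have := hasDerivAt_arccos (abs_lt.1 hcos).1.ne' (abs_lt.1 hcos).2.ne
  rwa [hsqrt, one_div] at this

theorem Real.hasDerivAt_arcosh_cosh {x : ℝ} (hx : 0 < x) :
    HasDerivAt Real.arcosh (sinh x)⁻¹ (cosh x) := by
  have hsqrt : √(cosh x ^ 2 - 1) = sinh x := by
    rw [cosh_sq', add_sub_cancel_left, sqrt_sq (sinh_pos_iff.2 hx).le]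
  simpa [hsqrt] using hasDerivAt_arcosh (one_lt_cosh.2 hx.ne')

theorem HasDerivAt.tendsto_div_nhdsGT_zero {f : ℝ → ℝ} {f' : ℝ} (hf : HasDerivAt f f' 0)
    (h₀ : f 0 = 0) : Tendsto (fun t => f t / t) (𝓝[>] 0) (𝓝 f') := by
  simpa [h₀, div_eq_inv_mul] using hf.tendsto_slope_zero_right

section LawOfCosines

variable {k c θ : ℝ}

theorem sideLen_apply_zero_of_pos (hk : 0 < k) (hc : 0 < c) (hcπ : c < π / √k) :
    sideLen k c θ 0 = c := by
  have hs : 0 < √k := sqrt_pos.2 hk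
  have hcπ' : √k * c ≤ π := by
    rw [lt_div_iff₀ hs] at hcπ
    linarith
  simp only [sideLen, if_pos hk, mul_zero, cos_zero, sin_zero, mul_one, zero_mul, add_zero,
    arccos_cos (by positivity) hcπ']
  field_simp

theorem sideLen_apply_zero_of_eq_zero (hk : k = 0) (hc : 0 < c) : sideLen k c θ 0 = c := by
  simp [sideLen, hk, sqrt_sq hc.le]

theorem sideLen_apply_zero_of_neg (hk : k < 0) (hc : 0 < c) : sideLen k c θ 0 = c := by
  have hs : 0 < √(-k) := sqrt_pos.2 (neg_pos.2 hk)
  simp only [sideLen, if_neg (not_lt.2 hk.le), if_neg hk.ne, mul_zero, cosh_zero, sinh_zero,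
    mul_one, zero_mul, sub_zero, arcosh_eq_real_arcosh, arcosh_cosh (by positivity : 0 ≤ √(-k) * c)]
  field_simp

theorem sideLen_apply_zero (hc : 0 < c) (hcπ : 0 < k → c < π / √k) : sideLen k c θ 0 = c := by
  rcases lt_trichotomy k 0 with hk | hk | hk
  · exact sideLen_apply_zero_of_neg hk hc
  · exact sideLen_apply_zero_of_eq_zero hk hc
  · exact sideLen_apply_zero_of_pos hk hc (hcπ hk)

theorem hasDerivAt_sideLen_of_pos (hk : 0 < k) (hc : 0 < c) (hcπ : c < π / √k) :
    HasDerivAt (sideLen k c θ) (-cos θ) 0 := by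
  unfold sideLen
  simp only [if_pos hk]
  set s := √k
  have hs : 0 < s := sqrt_pos.2 hk
  have hsc : s * c < π := by
    rw [lt_div_iff₀ hs] at hcπ
    linarith
  have hlin : HasDerivAt (fun τ => s * τ) s 0 := by
    simpa using (hasDerivAt_id (0 : ℝ)).const_mul s
  have hinner : HasDerivAt
      (fun τ => cos (s * c) * cos (s * τ) + sin (s * c) * sin (s * τ) * cos θ)
      (s * sin (s * c) * cos θ) 0 := by
    refine ((hlin.cos.const_mul _).add ((hlin.sin.const_mul _).mul_const _)).congr_deriv ?_
    simp only [mul_zero, sin_zero, cos_zero]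
    ring
  have harccos : HasDerivAt arccos (-(sin (s * c))⁻¹)
      (cos (s * c) * cos (s * 0) + sin (s * c) * sin (s * 0) * cos θ) := by
    simpa using hasDerivAt_arccos_cos (by positivity) hsc
  have hsin : sin (s * c) ≠ 0 := (sin_pos_of_pos_of_lt_pi (by positivity) hsc).ne'
  refine ((harccos.comp 0 hinner).const_mul (1 / s)).congr_deriv ?_
  field_simp

theorem hasDerivAt_sideLen_of_eq_zero (hk : k = 0) (hc : 0 < c) :
    HasDerivAt (sideLen k c θ) (-cos θ) 0 := by
  unfold sideLen
  simp only [hk, lt_irrefl, if_false, if_true]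
  have hinner : HasDerivAt (fun τ => c ^ 2 + τ ^ 2 - 2 * c * τ * cos θ)
      (-(2 * c * cos θ)) 0 := by
    refine (((hasDerivAt_pow 2 (0 : ℝ)).const_add _).sub
      (((hasDerivAt_id (0 : ℝ)).const_mul _).mul_const _)).congr_deriv ?_
    simp
  have hsqrt : HasDerivAt sqrt (1 / (2 * √(c ^ 2))) (c ^ 2 + 0 ^ 2 - 2 * c * 0 * cos θ) := by
    simpa using hasDerivAt_sqrt (by positivity : c ^ 2 ≠ 0)
  refine (hsqrt.comp 0 hinner).congr_deriv ?_
  rw [sqrt_sq hc.le]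
  field_simp

theorem hasDerivAt_sideLen_of_neg (hk : k < 0) (hc : 0 < c) :
    HasDerivAt (sideLen k c θ) (-cos θ) 0 := by
  unfold sideLen
  simp only [if_neg (not_lt.2 hk.le), if_neg hk.ne, arcosh_eq_real_arcosh]
  set s := √(-k)
  have hs : 0 < s := sqrt_pos.2 (neg_pos.2 hk)
  have hsc : 0 < s * c := by positivity
  have hlin : HasDerivAt (fun τ => s * τ) s 0 := by
    simpa using (hasDerivAt_id (0 : ℝ)).const_mul s
  have hinner : HasDerivAt
      (fun τ => cosh (s * c) * cosh (s * τ) - sinh (s * c) * sinh (s * τ) * cos θ)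
      (-(s * sinh (s * c) * cos θ)) 0 := by
    refine ((hlin.cosh.const_mul _).sub ((hlin.sinh.const_mul _).mul_const _)).congr_deriv ?_
    simp only [mul_zero, sinh_zero, cosh_zero]
    ring
  have harcosh : HasDerivAt Real.arcosh (sinh (s * c))⁻¹
      (cosh (s * c) * cosh (s * 0) - sinh (s * c) * sinh (s * 0) * cos θ) := by
    simpa using hasDerivAt_arcosh_cosh hsc
  have hsinh : sinh (s * c) ≠ 0 := (sinh_pos_iff.2 hsc).ne'
  refine ((harcosh.comp 0 hinner).const_mul (1 / s)).congr_deriv ?_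
  field_simp

theorem hasDerivAt_sideLen (hc : 0 < c) (hcπ : 0 < k → c < π / √k) :
    HasDerivAt (sideLen k c θ) (-cos θ) 0 := by
  rcases lt_trichotomy k 0 with hk | hk | hk
  · exact hasDerivAt_sideLen_of_neg hk hc
  · exact hasDerivAt_sideLen_of_eq_zero hk hc
  · exact hasDerivAt_sideLen_of_pos hk hc (hcπ hk)

end LawOfCosines

/-- If `m(τ) ≤ m'(τ) + o(τ)` as `τ → 0⁺` (i.e. `limsup (m(τ)−m'(τ))/τ ≤ 0`), then `θ ≤ θ'`. -/
theorem angle_mono_of_sideLen_le (k c θ θ' : ℝ) (hc : 0 < c)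
    (hcπ : 0 < k → c < Real.pi / Real.sqrt k)
    (hθ : θ ∈ Set.Icc 0 Real.pi) (hθ' : θ' ∈ Set.Icc 0 Real.pi)
    (h : Filter.limsup
        (fun τ => (((sideLen k c θ τ - sideLen k c θ' τ) / τ : ℝ) : EReal))
        (nhdsWithin 0 (Set.Ioi 0)) ≤ (0 : EReal)) :
    θ ≤ θ' := by
  have hdiff : HasDerivAt (fun τ => sideLen k c θ τ - sideLen k c θ' τ) (cos θ' - cos θ) 0 :=
    ((hasDerivAt_sideLen hc hcπ).sub (hasDerivAt_sideLen hc hcπ)).congr_deriv (by ring)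
  have hslope := hdiff.tendsto_div_nhdsGT_zero (by simp [sideLen_apply_zero hc hcπ])
  rw [(EReal.tendsto_coe.2 hslope).limsup_eq, EReal.coe_nonpos] at h
  exact (strictAntiOn_cos.le_iff_ge hθ' hθ).1 (sub_nonpos.1 h)
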